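/- arXiv:0805.3809 — 2 statements merged into one kernel-verified Lean document; each statement's English description precedes it below -/
import Mathlib

section
/- Let E ⊆ ℝⁿ and F ⊆ ℝᵐ be closed sets, and let P : ℝⁿ → ℝᵐ and Q : ℝᵐ → ℝⁿ be maps whose components are real polynomials, such that P(E) = F, Q(F) = E, Q(P(x)) = x for every x ∈ E, and P(Q(y)) = y for every y ∈ F. Then the assignment sending the restriction f|_F (for f ∈ S(ℝᵐ)) to the restriction (f∘P)|_E is a well-defined linear bijection from the set { f|_F : f ∈ S(ℝᵐ) } of restrictions to F of Schwartz functions onto the set { g|_E : g ∈ S(ℝⁿ) } of restrictions to E of Schwartz functions, with inverse sending g|_E to (g∘Q)|_F. -/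
/-! For `f` Schwartz on `ℝᵐ` and `θ` a Schwartz function on `ℝⁿ` with `θ 0 = 1`, the function
`x ↦ θ (x - Q (P x)) • f (P x)` agrees with `f ∘ P` on `E`. It is the pullback of the Schwartz
function `(y, v) ↦ θ v • f y` along `x ↦ (P x, x - Q (P x))`, a map of temperate growth whose
norm controls `‖x‖` polynomially since `x = Q (P x) + (x - Q (P x))`; so it is Schwartz. Hence
`f|_F ↦ (f ∘ P)|_E` sends restrictions of Schwartz functions to restrictions of Schwartz
functions, symmetrically for `Q`, and the two maps are mutually inverse since `Q ∘ P = id` on `E`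
and `P ∘ Q = id` on `F`. -/

/-- A map `ℝⁿ → ℝᵐ` all of whose components are real polynomials. -/
def IsPolyMap {n m : ℕ} (P : EuclideanSpace ℝ (Fin n) → EuclideanSpace ℝ (Fin m)) : Prop :=
  ∃ p : Fin m → MvPolynomial (Fin n) ℝ,
    ∀ (x : EuclideanSpace ℝ (Fin n)) (i : Fin m), P x i = MvPolynomial.eval (fun j => x j) (p i)

open Function SchwartzMap
open scoped ContDiff

variable {V W F : Type*} [NormedAddCommGroup V] [NormedSpace ℝ V]
  [NormedAddCommGroup W] [NormedSpace ℝ W] [NormedAddCommGroup F] [NormedSpace ℝ F]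

theorem MvPolynomial.hasTemperateGrowth_eval {ι : Type*} {φ : ι → V → ℝ}
    (hφ : ∀ j, HasTemperateGrowth (φ j)) (p : MvPolynomial ι ℝ) :
    HasTemperateGrowth fun x => MvPolynomial.eval (fun j => φ j x) p := by
  induction p using MvPolynomial.induction_on with
  | C a => simp
  | add p q hp hq => simpa using hp.fun_add hq
  | mul_X p j hp => simpa using hp.fun_mul (hφ j)

theorem IsPolyMap.hasTemperateGrowth {n m : ℕ}
    {P : EuclideanSpace ℝ (Fin n) → EuclideanSpace ℝ (Fin m)} (hP : IsPolyMap P) :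
    HasTemperateGrowth P := by
  obtain ⟨p, hp⟩ := hP
  have hPsum : P = fun x => ∑ i, MvPolynomial.eval (fun j => x j) (p i) •
      EuclideanSpace.basisFun (Fin m) ℝ i := by
    funext x
    simp_rw [← hp]
    exact ((EuclideanSpace.basisFun (Fin m) ℝ).sum_repr (P x)).symm
  rw [hPsum]
  refine HasTemperateGrowth.sum fun i _ => HasTemperateGrowth.fun_smul ?_ (.const _)
  exact MvPolynomial.hasTemperateGrowth_eval
    (fun j => (EuclideanSpace.proj j : EuclideanSpace ℝ (Fin n) →L[ℝ] ℝ).hasTemperateGrowth) (p i)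

theorem Function.HasTemperateGrowth.norm_le {f : V → W} (hf : HasTemperateGrowth f) :
    ∃ (k : ℕ) (C : ℝ), 0 ≤ C ∧ ∀ x, ‖f x‖ ≤ C * (1 + ‖x‖) ^ k := by
  obtain ⟨k, C, hC, h⟩ := hf.norm_iteratedFDeriv_le_uniform 0
  exact ⟨k, C, hC, fun x => by simpa using h 0 le_rfl x⟩

theorem Function.HasTemperateGrowth.prodMk {f : V → W} {g : V → F} (hf : HasTemperateGrowth f)
    (hg : HasTemperateGrowth g) : HasTemperateGrowth fun x => (f x, g x) := by
  have hsum := ((ContinuousLinearMap.inl ℝ W F).hasTemperateGrowth.comp hf).add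
    ((ContinuousLinearMap.inr ℝ W F).hasTemperateGrowth.comp hg)
  convert hsum using 2 with x
  simp

def defectMap (P : V → W) (Q : W → V) (x : V) : W × V := (P x, x - Q (P x))

theorem hasTemperateGrowth_defectMap {P : V → W} {Q : W → V} (hP : HasTemperateGrowth P)
    (hQ : HasTemperateGrowth Q) : HasTemperateGrowth (defectMap P Q) :=
  hP.prodMk (HasTemperateGrowth.id.sub (hQ.comp hP))

omit [NormedSpace ℝ V] [NormedSpace ℝ W] in
theorem norm_le_defectMap {Q : W → V} {k : ℕ} {C : ℝ} (hC : 0 ≤ C)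
    (hQ : ∀ y, ‖Q y‖ ≤ C * (1 + ‖y‖) ^ k) (P : V → W) (x : V) :
    ‖x‖ ≤ (C + 1) * (1 + ‖defectMap P Q x‖) ^ (k + 1) := by
  set t := ‖defectMap P Q x‖
  have hPx : ‖P x‖ ≤ t := norm_fst_le (defectMap P Q x)
  have hdefect : ‖x - Q (P x)‖ ≤ t := norm_snd_le (defectMap P Q x)
  have ht : 1 ≤ 1 + t := le_add_of_nonneg_right (norm_nonneg _)
  calc ‖x‖ ≤ ‖Q (P x)‖ + ‖x - Q (P x)‖ := norm_le_norm_add_norm_sub' x (Q (P x))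
    _ ≤ C * (1 + t) ^ k + t := add_le_add ((hQ (P x)).trans (by gcongr)) hdefect
    _ ≤ C * (1 + t) ^ (k + 1) + (1 + t) ^ (k + 1) := by
        gcongr
        · omega
        · exact (le_add_of_nonneg_left zero_le_one).trans (le_self_pow₀ ht k.succ_ne_zero)
    _ = (C + 1) * (1 + t) ^ (k + 1) := by ring

theorem norm_iteratedFDeriv_comp_right_le {f : W → F} (hf : ContDiff ℝ ∞ f) (L : V →L[ℝ] W)
    (hL : ‖L‖ ≤ 1) (i : ℕ) (x : V) :
    ‖iteratedFDeriv ℝ i (f ∘ L) x‖ ≤ ‖iteratedFDeriv ℝ i f (L x)‖ := by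
  rw [L.iteratedFDeriv_comp_right hf x (mod_cast le_top)]
  calc _ ≤ ‖iteratedFDeriv ℝ i f (L x)‖ * ∏ _j : Fin i, ‖L‖ :=
        ContinuousMultilinearMap.norm_compContinuousLinearMap_le _ _
    _ ≤ ‖iteratedFDeriv ℝ i f (L x)‖ * 1 := by
        gcongr
        exact Finset.prod_le_one (fun _ _ => norm_nonneg _) fun _ _ => hL
    _ = _ := mul_one _

omit [NormedSpace ℝ V] [NormedSpace ℝ W] in
theorem Prod.norm_pow_le_add (k : ℕ) (y : V) (v : W) : ‖(y, v)‖ ^ k ≤ ‖y‖ ^ k + ‖v‖ ^ k := by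
  rw [Prod.norm_def]
  rcases le_total ‖y‖ ‖v‖ with h | h
  · rw [max_eq_right h]; linarith [pow_nonneg (norm_nonneg y) k]
  · rw [max_eq_left h]; linarith [pow_nonneg (norm_nonneg v) k]

namespace SchwartzMap

noncomputable def smulProd (θ : 𝓢(W, ℝ)) (f : 𝓢(V, F)) : 𝓢(V × W, F) where
  toFun p := θ p.2 • f p.1
  smooth' := ((θ.smooth ⊤).comp contDiff_snd).smul ((f.smooth ⊤).comp contDiff_fst)
  decay' k n := by
    let S : ℕ → ℕ → ℝ := fun a b => SchwartzMap.seminorm ℝ a b θ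
    let T : ℕ → ℕ → ℝ := fun a b => SchwartzMap.seminorm ℝ a b f
    refine ⟨∑ i ∈ Finset.range (n + 1), (n.choose i : ℝ) *
      (S k i * T 0 (n - i) + S 0 i * T k (n - i)), fun ⟨y, v⟩ => ?_⟩
    have hθ i :
        ‖iteratedFDeriv ℝ i (fun p : V × W => θ p.2) (y, v)‖ ≤ ‖iteratedFDeriv ℝ i θ v‖ :=
      norm_iteratedFDeriv_comp_right_le (θ.smooth ⊤) (.snd ℝ V W)
        (ContinuousLinearMap.norm_snd_le ℝ V W) i _
    have hf i :
        ‖iteratedFDeriv ℝ i (fun p : V × W => f p.1) (y, v)‖ ≤ ‖iteratedFDeriv ℝ i f y‖ :=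
      norm_iteratedFDeriv_comp_right_le (f.smooth ⊤) (.fst ℝ V W)
        (ContinuousLinearMap.norm_fst_le ℝ V W) i _
    calc ‖(y, v)‖ ^ k * ‖iteratedFDeriv ℝ n (fun p : V × W => θ p.2 • f p.1) (y, v)‖
        ≤ (‖y‖ ^ k + ‖v‖ ^ k) * ∑ i ∈ Finset.range (n + 1), (n.choose i : ℝ) *
            ‖iteratedFDeriv ℝ i θ v‖ * ‖iteratedFDeriv ℝ (n - i) f y‖ := by
          gcongr
          · exact Prod.norm_pow_le_add k y v
          · refine (norm_iteratedFDeriv_smul_le ((θ.smooth ⊤).comp contDiff_snd)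
              ((f.smooth ⊤).comp contDiff_fst) _ (mod_cast le_top)).trans ?_
            gcongr with i
            exacts [hθ i, hf (n - i)]
      _ ≤ _ := by
          rw [Finset.mul_sum]
          refine Finset.sum_le_sum fun i _ => ?_
          have h1 := le_seminorm ℝ k i θ v
          have h2 := le_seminorm ℝ 0 i θ v
          have h3 := le_seminorm ℝ k (n - i) f y
          have h4 := le_seminorm ℝ 0 (n - i) f y
          simp only [pow_zero, one_mul] at h2 h4
          calc (‖y‖ ^ k + ‖v‖ ^ k) * ((n.choose i : ℝ) * ‖iteratedFDeriv ℝ i θ v‖ *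
                ‖iteratedFDeriv ℝ (n - i) f y‖)
              = (n.choose i : ℝ) * ((‖v‖ ^ k * ‖iteratedFDeriv ℝ i θ v‖) *
                  ‖iteratedFDeriv ℝ (n - i) f y‖ + ‖iteratedFDeriv ℝ i θ v‖ *
                  (‖y‖ ^ k * ‖iteratedFDeriv ℝ (n - i) f y‖)) := by ring
            _ ≤ _ := by gcongr

@[simp] theorem smulProd_apply (θ : 𝓢(W, ℝ)) (f : 𝓢(V, F)) (p : V × W) :
    smulProd θ f p = θ p.2 • f p.1 := rfl

end SchwartzMap

theorem SchwartzMap.exists_eq_one_at_zero (V : Type*) [NormedAddCommGroup V] [NormedSpace ℝ V]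
    [FiniteDimensional ℝ V] : ∃ θ : 𝓢(V, ℝ), θ 0 = 1 := by
  let c : ContDiffBump (0 : V) := ⟨1, 2, one_pos, one_lt_two⟩
  exact ⟨c.hasCompactSupport.toSchwartzMap c.contDiff,
    c.one_of_mem_closedBall (Metric.mem_closedBall_self zero_le_one)⟩

theorem SchwartzMap.exists_eqOn_comp [FiniteDimensional ℝ V] {E : Set V} {P : V → W}
    {Q : W → V} (hP : HasTemperateGrowth P) (hQ : HasTemperateGrowth Q) (hQP : Set.LeftInvOn Q P E)
    (f : 𝓢(W, F)) : ∃ g : 𝓢(V, F), Set.EqOn g (f ∘ P) E := by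
  obtain ⟨θ, hθ⟩ := exists_eq_one_at_zero V
  obtain ⟨k, C, hC, hQle⟩ := hQ.norm_le
  let g := compCLM ℝ (hasTemperateGrowth_defectMap hP hQ)
    ⟨k + 1, C + 1, norm_le_defectMap hC hQle P⟩ (smulProd θ f)
  refine ⟨g, fun x hx => ?_⟩
  simp [g, defectMap, hQP hx, hθ]

theorem stmt1_general {n m : ℕ} (E : Set (EuclideanSpace ℝ (Fin n))) (F : Set (EuclideanSpace ℝ (Fin m)))
    (P : EuclideanSpace ℝ (Fin n) → EuclideanSpace ℝ (Fin m))
    (Q : EuclideanSpace ℝ (Fin m) → EuclideanSpace ℝ (Fin n))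
    (hP : IsPolyMap P) (hQ : IsPolyMap Q)
    (hPE : P '' E = F)
    (hQP : ∀ x ∈ E, Q (P x) = x) (hPQ : ∀ y ∈ F, P (Q y) = y) :
    ∃ Φ : (↥F → ℂ) →ₗ[ℂ] (↥E → ℂ),
      (∀ f : SchwartzMap (EuclideanSpace ℝ (Fin m)) ℂ,
        Φ (F.restrict ⇑f) = E.restrict (fun x => f (P x))) ∧
      Set.BijOn Φ
        {u : ↥F → ℂ | ∃ f : SchwartzMap (EuclideanSpace ℝ (Fin m)) ℂ, u = F.restrict ⇑f}
        {v : ↥E → ℂ | ∃ g : SchwartzMap (EuclideanSpace ℝ (Fin n)) ℂ, v = E.restrict ⇑g} ∧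
      (∀ g : SchwartzMap (EuclideanSpace ℝ (Fin n)) ℂ,
        Φ (F.restrict (fun y => g (Q y))) = E.restrict ⇑g) := by
  have hEF : Set.MapsTo P E F := hPE ▸ Set.mapsTo_image P E
  have hsurj : Surjective (hEF.restrict P E F) := hEF.restrict_surjective_iff.2 hPE.ge
  refine ⟨LinearMap.funLeft ℂ ℂ (hEF.restrict P E F), fun f => rfl, ⟨?_, ?_, ?_⟩,
    fun g => funext fun x => congrArg g (hQP x x.2)⟩
  · rintro _ ⟨f, rfl⟩
    obtain ⟨g, hg⟩ := exists_eqOn_comp hP.hasTemperateGrowth hQ.hasTemperateGrowth hQP f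
    exact ⟨g, funext fun x => (hg x.2).symm⟩
  · exact (LinearMap.funLeft_injective_of_surjective _ _ _ hsurj).injOn
  · rintro _ ⟨g, rfl⟩
    obtain ⟨f, hf⟩ := exists_eqOn_comp hQ.hasTemperateGrowth hP.hasTemperateGrowth hPQ g
    refine ⟨_, ⟨f, rfl⟩, funext fun x => ?_⟩
    exact (hf (hEF x.2)).trans (congrArg g (hQP x x.2))

/-- Let `E ⊆ ℝⁿ`, `F ⊆ ℝᵐ` be closed, and `P, Q` polynomial maps with `P(E) = F`, `Q(F) = E`,
`Q∘P = id` on `E` and `P∘Q = id` on `F`.  Then the assignment `f|_F ↦ (f∘P)|_E` is a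
well-defined linear bijection from the restrictions to `F` of Schwartz functions onto the
restrictions to `E` of Schwartz functions, whose inverse sends `g|_E` to `(g∘Q)|_F`. -/
theorem stmt1 {n m : ℕ} (E : Set (EuclideanSpace ℝ (Fin n))) (F : Set (EuclideanSpace ℝ (Fin m)))
    (hE : IsClosed E) (hF : IsClosed F)
    (P : EuclideanSpace ℝ (Fin n) → EuclideanSpace ℝ (Fin m))
    (Q : EuclideanSpace ℝ (Fin m) → EuclideanSpace ℝ (Fin n))
    (hP : IsPolyMap P) (hQ : IsPolyMap Q)
    (hPE : P '' E = F) (hQF : Q '' F = E)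
    (hQP : ∀ x ∈ E, Q (P x) = x) (hPQ : ∀ y ∈ F, P (Q y) = y) :
    ∃ Φ : (↥F → ℂ) →ₗ[ℂ] (↥E → ℂ),
      (∀ f : SchwartzMap (EuclideanSpace ℝ (Fin m)) ℂ,
        Φ (F.restrict ⇑f) = E.restrict (fun x => f (P x))) ∧
      Set.BijOn Φ
        {u : ↥F → ℂ | ∃ f : SchwartzMap (EuclideanSpace ℝ (Fin m)) ℂ, u = F.restrict ⇑f}
        {v : ↥E → ℂ | ∃ g : SchwartzMap (EuclideanSpace ℝ (Fin n)) ℂ, v = E.restrict ⇑g} ∧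
      (∀ g : SchwartzMap (EuclideanSpace ℝ (Fin n)) ℂ,
        Φ (F.restrict (fun y => g (Q y))) = E.restrict ⇑g) :=
  stmt1_general E F P Q hP hQ hPE hQP hPQ
end

section
/- For every F ∈ S(ℝᵈ), the composition F∘ρ is a K-invariant Schwartz function on ℝᵐ, and the map F ↦ F∘ρ is a continuous linear operator from S(ℝᵈ) to S(ℝᵐ): for every p ∈ ℕ there exist q ∈ ℕ and C > 0 with ‖F∘ρ‖_{(p,ℝᵐ)} ≤ C ‖F‖_{(q,ℝᵈ)} for all F ∈ S(ℝᵈ). -/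
/-- The `p`-th Schwartz seminorm `‖f‖_{(p)} = sup_{x, |α| ≤ p} (1+|x|)^p |∂^α f(x)|`
(with derivatives of order `j ≤ p` measured by the iterated Fréchet derivative). -/
noncomputable def snorm' {W : Type*} [NormedAddCommGroup W] [NormedSpace ℝ W]
    (p : ℕ) (f : W → ℂ) : ℝ :=
  ⨆ q : Fin (p + 1) × W, (1 + ‖q.2‖) ^ p * ‖iteratedFDeriv ℝ (q.1 : ℕ) f q.2‖

/-- The action of an `m × m` real matrix on `ℝᵐ` (as Euclidean space). -/
noncomputable def mact {m : ℕ} (A : Matrix (Fin m) (Fin m) ℝ)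
    (x : EuclideanSpace ℝ (Fin m)) : EuclideanSpace ℝ (Fin m) :=
  (WithLp.equiv 2 (Fin m → ℝ)).symm (A.mulVec ((WithLp.equiv 2 (Fin m → ℝ)) x))

/-- The Hilbert map `ρ = (ρ₁,…,ρ_d) : ℝᵐ → ℝᵈ` associated to polynomials `ρ₁,…,ρ_d`. -/
noncomputable def evalMap {m d : ℕ} (ρp : Fin d → MvPolynomial (Fin m) ℝ)
    (x : EuclideanSpace ℝ (Fin m)) : EuclideanSpace ℝ (Fin d) :=
  (WithLp.equiv 2 (Fin d → ℝ)).symm (fun j => MvPolynomial.eval (fun i => x i) (ρp j))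

/-!
Both `x ↦ ρ x` and `‖x‖² = ∑ xᵢ²` are polynomial. The latter is `O(m)`-invariant, hence
`K`-invariant, hence a polynomial `Q ∘ ρ` in the Hilbert map, so
`‖x‖² = Q(ρ x) ≤ C (1 + ‖ρ x‖)ᵏ`. Thus `ρ` is a function of temperate growth that grows at
least polynomially at infinity, which is exactly what makes `F ↦ F ∘ ρ` a continuous linear map
between Schwartz spaces. Continuity then yields the estimate, because each `snorm' p` is
dominated by finitely many of the standard Schwartz seminorms and dominates them in turn.
-/

open MvPolynomial
open scoped SchwartzMap

theorem Function.HasTemperateGrowth.mvPolynomial_eval {E σ : Type*} [NormedAddCommGroup E]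
    [NormedSpace ℝ E] {f : σ → E → ℝ} (hf : ∀ i, (f i).HasTemperateGrowth)
    (P : MvPolynomial σ ℝ) :
    Function.HasTemperateGrowth fun x : E => MvPolynomial.eval (fun i => f i x) P := by
  induction P using MvPolynomial.induction_on with
  | C a => simp
  | add p q hp hq => simpa only [map_add] using hp.fun_add hq
  | mul_X p i hp => simpa only [map_mul, eval_X] using hp.fun_mul (hf i)

theorem EuclideanSpace.hasTemperateGrowth_apply {ι : Type*} [Fintype ι] (i : ι) :
    Function.HasTemperateGrowth fun x : EuclideanSpace ℝ ι => x i :=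
  (EuclideanSpace.proj i).hasTemperateGrowth

theorem hasTemperateGrowth_evalMap {m d : ℕ} (ρp : Fin d → MvPolynomial (Fin m) ℝ) :
    (evalMap ρp).HasTemperateGrowth := by
  have hsum : evalMap ρp =
      fun x => ∑ j, eval (fun i => x i) (ρp j) • EuclideanSpace.single j (1 : ℝ) := by
    ext x i
    simp [evalMap, Pi.single_apply]
  rw [hsum]
  exact .sum fun j _ => ((Function.HasTemperateGrowth.mvPolynomial_eval
    EuclideanSpace.hasTemperateGrowth_apply (ρp j)).fun_smul (.const _))

theorem norm_mact_of_mem_orthogonalGroup {m : ℕ} {A : Matrix (Fin m) (Fin m) ℝ}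
    (hA : A ∈ Matrix.orthogonalGroup (Fin m) ℝ) (x : EuclideanSpace ℝ (Fin m)) :
    ‖mact A x‖ = ‖x‖ := by
  rw [Matrix.mem_orthogonalGroup_iff'] at hA
  rw [← sq_eq_sq₀ (norm_nonneg _) (norm_nonneg _), ← real_inner_self_eq_norm_sq,
    ← real_inner_self_eq_norm_sq, EuclideanSpace.inner_eq_star_dotProduct,
    EuclideanSpace.inner_eq_star_dotProduct]
  simp only [mact, WithLp.equiv_symm_apply, WithLp.equiv_apply, star_trivial]
  rw [Matrix.dotProduct_mulVec, ← Matrix.mulVec_transpose, Matrix.mulVec_mulVec, hA,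
    Matrix.one_mulVec]

theorem eval_sum_X_sq {ι : Type*} [Fintype ι] (x : EuclideanSpace ℝ ι) :
    eval (fun i => x i) (∑ i, X i ^ 2) = ‖x‖ ^ 2 := by
  simp [EuclideanSpace.norm_sq_eq]

theorem eval_aeval_evalMap {m d : ℕ} (ρp : Fin d → MvPolynomial (Fin m) ℝ)
    (Q : MvPolynomial (Fin d) ℝ) (x : EuclideanSpace ℝ (Fin m)) :
    eval (fun i => x i) (aeval ρp Q) = eval (fun j => evalMap ρp x j) Q := by
  induction Q using MvPolynomial.induction_on <;> simp_all [evalMap]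

theorem exists_norm_le_of_sum_X_sq_mem_adjoin {m d : ℕ} {ρp : Fin d → MvPolynomial (Fin m) ℝ}
    (h : ∑ i, X i ^ 2 ∈ Algebra.adjoin ℝ (Set.range ρp)) :
    ∃ (k : ℕ) (C : ℝ), ∀ x, ‖x‖ ≤ C * (1 + ‖evalMap ρp x‖) ^ k := by
  rw [Algebra.adjoin_range_eq_range_aeval] at h
  obtain ⟨Q, hQ : aeval ρp Q = ∑ i, X i ^ 2⟩ := h
  obtain ⟨k, C, -, hQle⟩ := (Function.HasTemperateGrowth.mvPolynomial_eval
    EuclideanSpace.hasTemperateGrowth_apply Q).norm_iteratedFDeriv_le_uniform 0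
  refine ⟨k, 1 + C, fun x => ?_⟩
  have hsq : ‖x‖ ^ 2 ≤ C * (1 + ‖evalMap ρp x‖) ^ k := by
    have := hQle 0 le_rfl (evalMap ρp x)
    rwa [norm_iteratedFDeriv_zero, ← eval_aeval_evalMap, hQ, eval_sum_X_sq, norm_pow,
      norm_norm] at this
  have hone : (1 : ℝ) ≤ (1 + ‖evalMap ρp x‖) ^ k := one_le_pow₀ (by simp)
  nlinarith [sq_nonneg (‖x‖ - 1)]

namespace SchwartzMap

variable {W : Type*} [NormedAddCommGroup W] [NormedSpace ℝ W]

theorem snorm'_nonneg (p : ℕ) (f : W → ℂ) : 0 ≤ snorm' p f :=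
  Real.iSup_nonneg fun _ => by positivity

theorem bddAbove_snorm'_terms (p : ℕ) (F : 𝓢(W, ℂ)) :
    BddAbove (Set.range fun q : Fin (p + 1) × W =>
      (1 + ‖q.2‖) ^ p * ‖iteratedFDeriv ℝ (q.1 : ℕ) F q.2‖) := by
  refine ⟨2 ^ p * (Finset.Iic (p, p)).sup (fun m => SchwartzMap.seminorm ℂ m.1 m.2) F,
    Set.forall_mem_range.2 fun q => ?_⟩
  exact one_add_le_sup_seminorm_apply (m := (p, p)) le_rfl q.1.is_le F q.2

theorem snorm'_le_two_pow_mul_sup_seminorm (p : ℕ) (F : 𝓢(W, ℂ)) :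
    snorm' p F ≤
      2 ^ p * (Finset.Iic (p, p)).sup (fun m => SchwartzMap.seminorm ℂ m.1 m.2) F :=
  ciSup_le fun q =>
    one_add_le_sup_seminorm_apply (m := (p, p)) le_rfl q.1.is_le F q.2

theorem seminorm_le_snorm' {q k n : ℕ} (hk : k ≤ q) (hn : n ≤ q) (F : 𝓢(W, ℂ)) :
    SchwartzMap.seminorm ℂ k n F ≤ snorm' q F := by
  refine seminorm_le_bound ℂ k n F (snorm'_nonneg q F) fun x => ?_
  calc ‖x‖ ^ k * ‖iteratedFDeriv ℝ n F x‖
      ≤ (1 + ‖x‖) ^ q * ‖iteratedFDeriv ℝ n F x‖ := by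
        gcongr
        calc ‖x‖ ^ k ≤ (1 + ‖x‖) ^ k := by gcongr; simp
          _ ≤ (1 + ‖x‖) ^ q := pow_le_pow_right₀ (by simp) hk
    _ ≤ snorm' q F :=
        le_ciSup (bddAbove_snorm'_terms q F) (⟨n, Nat.lt_succ_of_le hn⟩, x)

theorem exists_snorm'_le_of_continuousLinearMap {V : Type*} [NormedAddCommGroup V]
    [NormedSpace ℝ V] (T : 𝓢(V, ℂ) →L[ℂ] 𝓢(W, ℂ)) (p : ℕ) :
    ∃ (q : ℕ) (C : ℝ), 0 < C ∧ ∀ F, snorm' p (T F) ≤ C * snorm' q F := by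
  set S := (Finset.Iic (p, p)).sup (schwartzSeminormFamily ℂ W ℂ)
  have hS : Continuous S := Seminorm.continuous_finsetSup fun i _ =>
    (schwartz_withSeminorms ℂ W ℂ).continuous_seminorm i
  have hST : Continuous (S.comp (T : 𝓢(V, ℂ) →ₗ[ℂ] 𝓢(W, ℂ))) := hS.comp T.continuous
  obtain ⟨s, C, hC, hTS⟩ := Seminorm.bound_of_continuous (schwartz_withSeminorms ℂ V ℂ) _ hST
  set q := s.sup fun m => max m.1 m.2
  have hsq (F : 𝓢(V, ℂ)) : s.sup (schwartzSeminormFamily ℂ V ℂ) F ≤ snorm' q F := by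
    refine Seminorm.finset_sup_apply_le (snorm'_nonneg q F) fun m hm => ?_
    have hmq : max m.1 m.2 ≤ q := Finset.le_sup (f := fun m : ℕ × ℕ => max m.1 m.2) hm
    exact seminorm_le_snorm' (le_of_max_le_left hmq) (le_of_max_le_right hmq) F
  refine ⟨q, 2 ^ p * C, by positivity, fun F => ?_⟩
  have hTF : S (T F) ≤ C * s.sup (schwartzSeminormFamily ℂ V ℂ) F := hTS F
  calc snorm' p (T F) ≤ 2 ^ p * S (T F) := snorm'_le_two_pow_mul_sup_seminorm p (T F)
    _ ≤ 2 ^ p * (C * snorm' q F) := by gcongr; exact hTF.trans (by gcongr; exact hsq F)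
    _ = 2 ^ p * C * snorm' q F := by ring

end SchwartzMap

theorem stmt9_general (m d : ℕ)
    (K : Subgroup (Matrix.orthogonalGroup (Fin m) ℝ))
    (ρp : Fin d → MvPolynomial (Fin m) ℝ)
    (hρinv : ∀ j, ∀ k ∈ K, ∀ x : EuclideanSpace ℝ (Fin m),
      MvPolynomial.eval (fun i => mact (k : Matrix (Fin m) (Fin m) ℝ) x i) (ρp j) =
        MvPolynomial.eval (fun i => x i) (ρp j))
    (hρgen : ∀ P : MvPolynomial (Fin m) ℝ,
      (∀ k ∈ K, ∀ x : EuclideanSpace ℝ (Fin m),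
        MvPolynomial.eval (fun i => mact (k : Matrix (Fin m) (Fin m) ℝ) x i) P =
          MvPolynomial.eval (fun i => x i) P) →
      P ∈ Algebra.adjoin ℝ (Set.range ρp)) :
    ∃ T : SchwartzMap (EuclideanSpace ℝ (Fin d)) ℂ →L[ℂ]
        SchwartzMap (EuclideanSpace ℝ (Fin m)) ℂ,
      (∀ (F : SchwartzMap (EuclideanSpace ℝ (Fin d)) ℂ) (x : EuclideanSpace ℝ (Fin m)),
        T F x = F (evalMap ρp x)) ∧
      (∀ F : SchwartzMap (EuclideanSpace ℝ (Fin d)) ℂ,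
        ∀ k ∈ K, ∀ x, T F (mact (k : Matrix (Fin m) (Fin m) ℝ) x) = T F x) ∧
      ∀ p : ℕ, ∃ (q : ℕ) (C : ℝ), 0 < C ∧
        ∀ F : SchwartzMap (EuclideanSpace ℝ (Fin d)) ℂ,
          snorm' p ⇑(T F) ≤ C * snorm' q ⇑F := by
  have hnormSq : ∑ i, X i ^ 2 ∈ Algebra.adjoin ℝ (Set.range ρp) :=
    hρgen _ fun k _ x => by
      rw [eval_sum_X_sq, eval_sum_X_sq, norm_mact_of_mem_orthogonalGroup k.2]
  let T : 𝓢(EuclideanSpace ℝ (Fin d), ℂ) →L[ℂ] 𝓢(EuclideanSpace ℝ (Fin m), ℂ) :=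
    SchwartzMap.compCLM ℂ (hasTemperateGrowth_evalMap ρp)
      (exists_norm_le_of_sum_X_sq_mem_adjoin hnormSq)
  refine ⟨T, fun F x => rfl, fun F k hk x => ?_,
    SchwartzMap.exists_snorm'_le_of_continuousLinearMap T⟩
  change F (evalMap ρp (mact k x)) = F (evalMap ρp x)
  congr 1
  ext j
  exact hρinv j k hk x

/-- For every `F ∈ 𝓢(ℝᵈ)`, the composition `F ∘ ρ` with the Hilbert map is a `K`-invariant
Schwartz function on `ℝᵐ`, and `F ↦ F ∘ ρ` is a continuous linear operator
`𝓢(ℝᵈ) → 𝓢(ℝᵐ)`: for every `p` there are `q` and `C > 0` with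
`‖F∘ρ‖_{(p,ℝᵐ)} ≤ C ‖F‖_{(q,ℝᵈ)}`. -/
theorem stmt9 (m d : ℕ) (hm : 1 ≤ m)
    (K : Subgroup (Matrix.orthogonalGroup (Fin m) ℝ))
    (hK : IsClosed (K : Set (Matrix.orthogonalGroup (Fin m) ℝ)))
    (ρp : Fin d → MvPolynomial (Fin m) ℝ)
    (hρinv : ∀ j, ∀ k ∈ K, ∀ x : EuclideanSpace ℝ (Fin m),
      MvPolynomial.eval (fun i => mact (k : Matrix (Fin m) (Fin m) ℝ) x i) (ρp j) =
        MvPolynomial.eval (fun i => x i) (ρp j))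
    (hρgen : ∀ P : MvPolynomial (Fin m) ℝ,
      (∀ k ∈ K, ∀ x : EuclideanSpace ℝ (Fin m),
        MvPolynomial.eval (fun i => mact (k : Matrix (Fin m) (Fin m) ℝ) x i) P =
          MvPolynomial.eval (fun i => x i) P) →
      P ∈ Algebra.adjoin ℝ (Set.range ρp)) :
    ∃ T : SchwartzMap (EuclideanSpace ℝ (Fin d)) ℂ →L[ℂ]
        SchwartzMap (EuclideanSpace ℝ (Fin m)) ℂ,
      (∀ (F : SchwartzMap (EuclideanSpace ℝ (Fin d)) ℂ) (x : EuclideanSpace ℝ (Fin m)),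
        T F x = F (evalMap ρp x)) ∧
      (∀ F : SchwartzMap (EuclideanSpace ℝ (Fin d)) ℂ,
        ∀ k ∈ K, ∀ x, T F (mact (k : Matrix (Fin m) (Fin m) ℝ) x) = T F x) ∧
      ∀ p : ℕ, ∃ (q : ℕ) (C : ℝ), 0 < C ∧
        ∀ F : SchwartzMap (EuclideanSpace ℝ (Fin d)) ℂ,
          snorm' p ⇑(T F) ≤ C * snorm' q ⇑F :=
  stmt9_general m d K ρp hρinv hρgen
end
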